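/- arXiv:2602.02068 — 7 statements merged into one kernel-verified Lean document; each statement's English description precedes it below -/
import Mathlib

section
/- Let {α_k} and {c_k} be sequences of nonnegative real numbers indexed by k = 0,...,n satisfying α_{k+1} ≤ α_k(1 + τ α_k^s) + τ c_k for some s > 0 and τ > 0. Set α = max(1, α_0) and a_k = 1 + max_{0 ≤ i ≤ k} c_i. Then for every k with t_k = kτ < 1/(s α^s a_k), one has α_k ≤ α / (1 - s α^s t_k a_k)^{1/s}. -/
/-!
The bound is the solution `Y t = A (1 - s A^s a t)^(-1/s)` of `Y' = a Y^(1+s)`, `Y 0 = A`.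
Since `Y` is convex, `Y (t + τ) ≥ Y t + τ a Y t^(1+s)`, which (as `Y ≥ 1` and `c_j ≤ a - 1`)
dominates the recursion `x ↦ x (1 + τ x^s) + τ c_j`. This map is monotone on `[0, ∞)`, so
`α_j ≤ Y (j τ)` follows by induction.
-/

open Real

lemma one_add_mul_one_sub_le_rpow_neg {x p : ℝ} (hx : 0 < x) (hp : 0 ≤ p) :
    1 + p * (1 - x) ≤ x ^ (-p) := by
  rw [rpow_def_of_pos hx]
  nlinarith [add_one_le_exp (log x * -p), log_le_sub_one_of_pos hx]

lemma monotoneOn_mul_one_add_mul_rpow {s τ : ℝ} (hs : 0 ≤ s) (hτ : 0 ≤ τ) :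
    MonotoneOn (fun x : ℝ => x * (1 + τ * x ^ s)) (Set.Ici 0) := by
  intro x hx y hy hxy
  have := rpow_le_rpow hx hxy hs
  have := rpow_nonneg hx s
  dsimp only
  gcongr

theorem le_of_monotoneOn_recursion {γ : Type*} [Preorder γ] {S : Set γ} {f : ℕ → γ → γ}
    {x y : ℕ → γ} {m : ℕ} (hf : ∀ k < m, MonotoneOn (f k) S)
    (hx : ∀ k ≤ m, x k ∈ S) (hy : ∀ k ≤ m, y k ∈ S) (h0 : x 0 ≤ y 0)
    (hxf : ∀ k < m, x (k + 1) ≤ f k (x k)) (hyf : ∀ k < m, f k (y k) ≤ y (k + 1)) :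
    ∀ k ≤ m, x k ≤ y k := by
  intro k hk
  induction k with
  | zero => exact h0
  | succ k ih =>
    calc x (k + 1) ≤ f k (x k) := hxf k hk
      _ ≤ f k (y k) := hf k hk (hx k (by omega)) (hy k (by omega)) (ih (by omega))
      _ ≤ y (k + 1) := hyf k hk

/-- Explicit solution of `y' = a y^(1+s)`, `y 0 = A`, blowing up at `t = 1 / (s A^s a)`. -/
noncomputable def blowupBound (s A a t : ℝ) : ℝ :=
  A / (1 - s * A ^ s * t * a) ^ (1 / s)

section blowupBound

variable {s A a t τ : ℝ}

lemma blowupBound_zero : blowupBound s A a 0 = A := by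
  simp [blowupBound]

lemma le_blowupBound (hs : 0 < s) (hA : 0 ≤ A) (ha : 0 ≤ a) (ht : 0 ≤ t)
    (hlt : s * A ^ s * t * a < 1) : A ≤ blowupBound s A a t := by
  have hu : 0 ≤ s * A ^ s * t * a := by positivity
  apply le_div_self hA (by apply rpow_pos_of_pos; linarith)
  exact rpow_le_one (by linarith) (by linarith) (by positivity)

lemma blowupBound_rpow (hs : s ≠ 0) (hA : 0 ≤ A) (hlt : s * A ^ s * t * a < 1) :
    blowupBound s A a t ^ s = A ^ s / (1 - s * A ^ s * t * a) := by
  have hu : 0 ≤ 1 - s * A ^ s * t * a := by linarith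
  rw [blowupBound, div_rpow hA (rpow_nonneg hu _), ← rpow_mul hu, one_div_mul_cancel hs, rpow_one]

lemma blowupBound_mul_le (hs : 0 < s) (hA : 0 ≤ A) (ha : 0 ≤ a) (hτ : 0 ≤ τ)
    (hlt : s * A ^ s * (t + τ) * a < 1) :
    blowupBound s A a t * (1 + τ * a * blowupBound s A a t ^ s) ≤ blowupBound s A a (t + τ) := by
  set u := 1 - s * A ^ s * t * a
  have hδ : 0 ≤ s * A ^ s * τ * a := by positivity
  have hu' : 1 - s * A ^ s * (t + τ) * a = u - s * A ^ s * τ * a := by ring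
  have hpos : 0 < u - s * A ^ s * τ * a := by rw [← hu']; linarith
  have hu : 0 < u := by linarith
  have hr : 0 < (u - s * A ^ s * τ * a) / u := div_pos hpos hu
  have bernoulli := one_add_mul_one_sub_le_rpow_neg hr (one_div_nonneg.2 hs.le)
  have hlin : 1 / s * (1 - (u - s * A ^ s * τ * a) / u) = τ * a * (A ^ s / u) := by
    field_simp; ring
  rw [hlin, rpow_neg hr.le, div_rpow hpos.le hu.le, inv_div] at bernoulli
  have hlt' : s * A ^ s * t * a < 1 := by linarith
  rw [blowupBound_rpow hs.ne' hA hlt', blowupBound, blowupBound, hu']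
  calc A / u ^ (1 / s) * (1 + τ * a * (A ^ s / u))
      ≤ A / u ^ (1 / s) * (u ^ (1 / s) / (u - s * A ^ s * τ * a) ^ (1 / s)) := by gcongr
    _ = A / (u - s * A ^ s * τ * a) ^ (1 / s) := by
      field_simp [(rpow_pos_of_pos hu (1 / s)).ne']

lemma blowupBound_step {c : ℝ} (hs : 0 < s) (hA : 1 ≤ A) (ha : 1 ≤ a) (hca : c ≤ a - 1)
    (ht : 0 ≤ t) (hτ : 0 ≤ τ) (hlt : s * A ^ s * (t + τ) * a < 1) :
    blowupBound s A a t * (1 + τ * blowupBound s A a t ^ s) + τ * c ≤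
      blowupBound s A a (t + τ) := by
  have hlt' : s * A ^ s * t * a < 1 := lt_of_le_of_lt (by gcongr; linarith) hlt
  set Y := blowupBound s A a t
  have hY : 1 ≤ Y := hA.trans (le_blowupBound hs (by linarith) (by linarith) ht hlt')
  have hYs : 1 ≤ Y ^ s := one_le_rpow hY hs.le
  have hc : c ≤ (a - 1) * (Y * Y ^ s) :=
    hca.trans (le_mul_of_one_le_right (by linarith) (one_le_mul_of_one_le_of_one_le hY hYs))
  calc Y * (1 + τ * Y ^ s) + τ * c ≤ Y * (1 + τ * Y ^ s) + τ * ((a - 1) * (Y * Y ^ s)) := by gcongr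
    _ = Y * (1 + τ * a * Y ^ s) := by ring
    _ ≤ blowupBound s A a (t + τ) := blowupBound_mul_le hs (by linarith) (by linarith) hτ hlt

end blowupBound

theorem stmt0 (n : ℕ) (α c : ℕ → ℝ) (s τ : ℝ) (hs : 0 < s) (hτ : 0 < τ)
    (hαnn : ∀ k ≤ n, 0 ≤ α k) (hcnn : ∀ k ≤ n, 0 ≤ c k)
    (hrec : ∀ k < n, α (k + 1) ≤ α k * (1 + τ * α k ^ s) + τ * c k) :
    ∀ k ≤ n,
      (k : ℝ) * τ < 1 / (s * (max 1 (α 0)) ^ s *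
          (1 + (Finset.range (k + 1)).sup' ⟨0, Finset.mem_range.2 (Nat.succ_pos k)⟩ c)) →
      α k ≤ (max 1 (α 0)) /
        (1 - s * (max 1 (α 0)) ^ s * ((k : ℝ) * τ) *
          (1 + (Finset.range (k + 1)).sup' ⟨0, Finset.mem_range.2 (Nat.succ_pos k)⟩ c)) ^ (1 / s) := by
  intro k hk hcond
  set A := max 1 (α 0)
  set a := 1 + (Finset.range (k + 1)).sup' ⟨0, Finset.mem_range.2 (Nat.succ_pos k)⟩ c
  have hA : 1 ≤ A := le_max_left _ _
  have hca : ∀ j ≤ k, c j ≤ a - 1 := fun j hj => by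
    simpa [a] using Finset.le_sup' c (Finset.mem_range.2 (Nat.lt_succ_of_le hj))
  have ha : 1 ≤ a := by linarith [hca 0 (Nat.zero_le k), hcnn 0 (Nat.zero_le n)]
  have hlt : ∀ j ≤ k, s * A ^ s * (j * τ) * a < 1 := fun j hj => by
    have hpos : 0 < s * A ^ s * a := by positivity
    have hj' : (j : ℝ) * τ ≤ k * τ := by gcongr
    calc s * A ^ s * (j * τ) * a = s * A ^ s * a * (j * τ) := by ring
      _ < 1 := by rw [lt_div_iff₀ hpos] at hcond; nlinarith
  refine le_of_monotoneOn_recursion (S := Set.Ici 0) (f := fun j x => x * (1 + τ * x ^ s) + τ * c j)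
    (y := fun j => blowupBound s A a (j * τ)) (fun j _ => ?_) (fun j hj => hαnn j (hj.trans hk))
    (fun j hj => ?_) ?_ (fun j hj => hrec j (by omega)) (fun j hj => ?_) k le_rfl
  · exact (monotoneOn_mul_one_add_mul_rpow hs.le hτ.le).add_const _
  · exact zero_le_one.trans (hA.trans (le_blowupBound hs (by linarith) (by linarith)
      (by positivity) (hlt j hj)))
  · simp only [Nat.cast_zero, zero_mul, blowupBound_zero]
    exact le_max_right _ _
  · have hlt' := hlt (j + 1) hj
    simp only [Nat.cast_succ, add_mul, one_mul] at hlt' ⊢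
    exact blowupBound_step (t := j * τ) hs hA ha (hca j hj.le) (by positivity) hτ.le hlt'
end

section
/- Let H be a real Hilbert space, A a self-adjoint operator with (Aφ,φ) ≥ ν‖φ‖² for ν > 0, C bounded symmetric nonnegative with norm c, and γ, δ > 0, L = γA + δC. Then for every ε with 0 < ε < γ/δ and every φ ∈ D(A): ‖Lφ‖ ≥ γ̂ ‖Aφ‖, where γ̂ = sqrt( γ(γ − εδ) / (1 + (c²δ/(εγ²ν²))(γ − εδ)) ). -/
/-!
Testing `Lφ` against `φ` gives `γν‖φ‖ ≤ ‖Lφ‖`, hence `‖Cφ‖ ≤ (c/(γν))‖Lφ‖`. Expanding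
`‖γAφ + δCφ‖²` and bounding the cross term by `2ab ≤ εa² + b²/ε` (`a = ‖Aφ‖`, `b = ‖Cφ‖`) yields
`γ(γ - εδ)‖Aφ‖² ≤ ‖Lφ‖² + (δ/ε)(γ - εδ)‖Cφ‖²`, and inserting the bound on `‖Cφ‖` gives the claim.
-/

open scoped RealInnerProductSpace

section InnerProductSpace

variable {H : Type*} [NormedAddCommGroup H] [InnerProductSpace ℝ H]

theorem mul_norm_le_norm_of_mul_norm_sq_le_inner {x y : H} {ν : ℝ}
    (h : ν * ‖x‖ ^ 2 ≤ ⟪y, x⟫) : ν * ‖x‖ ≤ ‖y‖ := by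
  rcases (norm_nonneg x).eq_or_lt with hx | hx
  · simp [← hx]
  · refine le_of_mul_le_mul_right ?_ hx
    calc ν * ‖x‖ * ‖x‖ = ν * ‖x‖ ^ 2 := by ring
      _ ≤ ⟪y, x⟫ := h
      _ ≤ ‖y‖ * ‖x‖ := real_inner_le_norm y x

theorem mul_sub_mul_norm_sq_le_norm_smul_add_smul_sq (u v : H) {γ δ ε : ℝ}
    (hγ : 0 ≤ γ) (hδ : 0 ≤ δ) (hε : 0 < ε) :
    γ * (γ - ε * δ) * ‖u‖ ^ 2 - δ / ε * (γ - ε * δ) * ‖v‖ ^ 2 ≤ ‖γ • u + δ • v‖ ^ 2 := by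
  have hcross : -(‖u‖ * ‖v‖) ≤ ⟪u, v⟫ := neg_le_of_abs_le (abs_real_inner_le_norm u v)
  have hyoung : 2 * (‖u‖ * ‖v‖) ≤ ε * ‖u‖ ^ 2 + ‖v‖ ^ 2 / ε :=
    calc 2 * (‖u‖ * ‖v‖) = 2 * (ε * ‖u‖) * ‖v‖ / ε := by field_simp
      _ ≤ ((ε * ‖u‖) ^ 2 + ‖v‖ ^ 2) / ε := by gcongr; exact two_mul_le_add_sq _ _
      _ = ε * ‖u‖ ^ 2 + ‖v‖ ^ 2 / ε := by field_simp
  have hexpand :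
      ‖γ • u + δ • v‖ ^ 2 = γ ^ 2 * ‖u‖ ^ 2 + 2 * (γ * δ) * ⟪u, v⟫ + δ ^ 2 * ‖v‖ ^ 2 := by
    rw [norm_add_sq_real, norm_smul, norm_smul, real_inner_smul_left, real_inner_smul_right,
      Real.norm_of_nonneg hγ, Real.norm_of_nonneg hδ]
    ring
  have hγδ : 0 ≤ γ * δ := mul_nonneg hγ hδ
  calc γ * (γ - ε * δ) * ‖u‖ ^ 2 - δ / ε * (γ - ε * δ) * ‖v‖ ^ 2
      = γ ^ 2 * ‖u‖ ^ 2 - γ * δ * (ε * ‖u‖ ^ 2 + ‖v‖ ^ 2 / ε) + δ ^ 2 * ‖v‖ ^ 2 := by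
        field_simp; ring
    _ ≤ γ ^ 2 * ‖u‖ ^ 2 - 2 * (γ * δ) * (‖u‖ * ‖v‖) + δ ^ 2 * ‖v‖ ^ 2 := by
        linarith [mul_le_mul_of_nonneg_left hyoung hγδ]
    _ ≤ ‖γ • u + δ • v‖ ^ 2 := by
        rw [hexpand]; linarith [mul_le_mul_of_nonneg_left hcross hγδ]

end InnerProductSpace

theorem Real.sqrt_mul_le_of_mul_sq_le {x a b : ℝ} (ha : 0 ≤ a) (hb : 0 ≤ b)
    (h : x * a ^ 2 ≤ b ^ 2) : Real.sqrt x * a ≤ b := by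
  calc Real.sqrt x * a = Real.sqrt (x * a ^ 2) := by
        rw [Real.sqrt_mul' x (sq_nonneg a), Real.sqrt_sq ha]
    _ ≤ Real.sqrt (b ^ 2) := Real.sqrt_le_sqrt h
    _ = b := Real.sqrt_sq hb

theorem stmt2_general {H : Type*} [NormedAddCommGroup H] [InnerProductSpace ℝ H]
    (A : H →ₗ[ℝ] H) (C : H →L[ℝ] H) (ν γ δ : ℝ) (hν : 0 < ν) (hγ : 0 < γ) (hδ : 0 < δ)
    (hApos : ∀ x : H, ν * ‖x‖ ^ 2 ≤ ⟪A x, x⟫)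
    (hCpos : ∀ x : H, 0 ≤ ⟪C x, x⟫) :
    ∀ ε : ℝ, 0 < ε → ε < γ / δ → ∀ φ : H,
      Real.sqrt (γ * (γ - ε * δ) /
          (1 + (‖C‖ ^ 2 * δ / (ε * γ ^ 2 * ν ^ 2)) * (γ - ε * δ))) * ‖A φ‖ ≤
        ‖γ • A φ + δ • C φ‖ := by
  intro ε hε hεlt φ
  set ℓ := ‖γ • A φ + δ • C φ‖
  have hβ : 0 < γ - ε * δ := by rw [lt_div_iff₀ hδ] at hεlt; linarith
  have hcoercive : γ * ν * ‖φ‖ ≤ ℓ := by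
    refine mul_norm_le_norm_of_mul_norm_sq_le_inner ?_
    rw [inner_add_left, real_inner_smul_left, real_inner_smul_left]
    linarith [mul_le_mul_of_nonneg_left (hApos φ) hγ.le, mul_nonneg hδ.le (hCpos φ)]
  have hCφ : ‖C φ‖ ≤ ‖C‖ / (γ * ν) * ℓ := by
    calc ‖C φ‖ ≤ ‖C‖ * ‖φ‖ := C.le_opNorm φ
      _ ≤ ‖C‖ * (ℓ / (γ * ν)) := by
          gcongr; rwa [le_div_iff₀ (by positivity), mul_comm]
      _ = ‖C‖ / (γ * ν) * ℓ := by ring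
  refine Real.sqrt_mul_le_of_mul_sq_le (norm_nonneg _) (norm_nonneg _) ?_
  rw [div_mul_eq_mul_div, div_le_iff₀ (by positivity)]
  calc γ * (γ - ε * δ) * ‖A φ‖ ^ 2 ≤ ℓ ^ 2 + δ / ε * (γ - ε * δ) * ‖C φ‖ ^ 2 := by
        linarith [mul_sub_mul_norm_sq_le_norm_smul_add_smul_sq (A φ) (C φ) hγ.le hδ.le hε]
    _ ≤ ℓ ^ 2 + δ / ε * (γ - ε * δ) * (‖C‖ / (γ * ν) * ℓ) ^ 2 := by gcongr
    _ = ℓ ^ 2 * (1 + ‖C‖ ^ 2 * δ / (ε * γ ^ 2 * ν ^ 2) * (γ - ε * δ)) := by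
        field_simp

theorem stmt2 {H : Type*} [NormedAddCommGroup H] [InnerProductSpace ℝ H] [CompleteSpace H]
    (A : H →ₗ[ℝ] H) (C : H →L[ℝ] H) (ν γ δ : ℝ) (hν : 0 < ν) (hγ : 0 < γ) (hδ : 0 < δ)
    (hAsym : ∀ x y : H, ⟪A x, y⟫ = ⟪x, A y⟫)
    (hApos : ∀ x : H, ν * ‖x‖ ^ 2 ≤ ⟪A x, x⟫)
    (hCsym : ∀ x y : H, ⟪C x, y⟫ = ⟪x, C y⟫)
    (hCpos : ∀ x : H, 0 ≤ ⟪C x, x⟫) :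
    ∀ ε : ℝ, 0 < ε → ε < γ / δ → ∀ φ : H,
      Real.sqrt (γ * (γ - ε * δ) /
          (1 + (‖C‖ ^ 2 * δ / (ε * γ ^ 2 * ν ^ 2)) * (γ - ε * δ))) * ‖A φ‖ ≤
        ‖γ • A φ + δ • C φ‖ :=
  stmt2_general A C ν γ δ hν hγ hδ hApos hCpos
end

section
/- Let H be a real Hilbert space, A self-adjoint positive definite with A ≥ νI (ν > 0), and B a closed linear operator. Suppose D₁ ⊆ D(A) with B mapping D₁ into D(A) and (ABφ, Bφ) ≤ c₃² ‖Aφ‖² for all φ ∈ D₁ with c₃ > 0. If R₁ = A(D₁) is dense in H, then ‖A^{1/2} Bφ‖ ≤ c₃ ‖Aφ‖ for every φ ∈ D(A). -/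
/-!
For `y ∈ D₁` the hypothesis reads `‖A^{1/2} B y‖² = ⟪A B y, B y⟫ ≤ c₃² ‖A y‖²`, and since
`A ≥ ν` it also bounds `‖B y‖` by `c₃ ν^{-1/2} ‖A y‖`. Given `φ ∈ D(A)`, density of `A(D₁)`
yields `yₙ ∈ D₁` with `A yₙ → A φ`; coercivity of `A` forces `yₙ → φ`, and the second bound makes
`B yₙ` Cauchy. As `B` is closed, `φ ∈ D(B)` and `B yₙ → B φ`, so the point `(A φ, B φ)` lies in
the closure of `{(A y, B y) | y ∈ D₁}`. The set of pairs `(u, w)` with `‖A^{1/2} w‖ ≤ c₃ ‖u‖` is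
closed (`A^{1/2}` is symmetric and everywhere defined, hence bounded) and contains the latter set.
-/

open scoped RealInnerProductSpace
open Filter Topology

theorem cauchySeq_of_dist_le_mul {α β : Type*} [PseudoMetricSpace α] [PseudoMetricSpace β]
    {u : ℕ → α} {v : ℕ → β} (K : ℝ) (hu : CauchySeq u)
    (h : ∀ m n, dist (v m) (v n) ≤ K * dist (u m) (u n)) : CauchySeq v := by
  rw [cauchySeq_iff_tendsto_dist_atTop_0] at hu ⊢
  exact squeeze_zero (fun _ => dist_nonneg) (fun p => h p.1 p.2) (by simpa using hu.const_mul K)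

namespace LinearPMap

variable {R E F G : Type*} [Ring R] [NormedAddCommGroup E] [Module R E]
  [NormedAddCommGroup F] [Module R F] [CompleteSpace F] [NormedAddCommGroup G] [Module R G]

theorem exists_mem_closure_range_of_denseImage (B : E →ₗ.[R] F)
    (hB : _root_.IsClosed (B.graph : Set (E × F))) (A : E →ₗ[R] G) {D : Submodule R E}
    (hD : D ≤ B.domain) (C K : ℝ) (hA : ∀ x, ‖x‖ ≤ C * ‖A x‖)
    (hBA : ∀ x (hx : x ∈ D), ‖B ⟨x, hD hx⟩‖ ≤ K * ‖A x‖) (hdense : Dense (A '' (D : Set E)))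
    (φ : E) :
    ∃ hφ : φ ∈ B.domain, (A φ, B ⟨φ, hφ⟩) ∈
      _root_.closure (Set.range fun y : D => (A y, B (Submodule.inclusion hD y))) := by
  obtain ⟨u, hu_mem, hu⟩ := mem_closure_iff_seq_limit.mp (hdense (A φ))
  choose y hyD hAy using hu_mem
  set w : ℕ → F := fun n => B (Submodule.inclusion hD ⟨y n, hyD n⟩)
  have hy : Tendsto y atTop (𝓝 φ) := by
    rw [tendsto_iff_norm_sub_tendsto_zero]
    refine squeeze_zero (fun _ => norm_nonneg _) (fun n => ?_)
      (by simpa using (tendsto_iff_norm_sub_tendsto_zero.mp hu).const_mul C)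
    rw [← hAy, ← _root_.map_sub]
    exact hA _
  have hw : CauchySeq w := by
    refine cauchySeq_of_dist_le_mul K hu.cauchySeq fun m n => ?_
    have hmn : ‖B (Submodule.inclusion hD ⟨y m, hyD m⟩ - Submodule.inclusion hD ⟨y n, hyD n⟩)‖
        ≤ K * ‖A (y m - y n)‖ := hBA _ (D.sub_mem (hyD m) (hyD n))
    rwa [B.map_sub, _root_.map_sub, hAy, hAy, ← dist_eq_norm, ← dist_eq_norm] at hmn
  obtain ⟨ψ, hψ⟩ := cauchySeq_tendsto_of_complete hw
  have hgraph : (φ, ψ) ∈ B.graph :=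
    hB.mem_of_tendsto (hy.prodMk_nhds hψ)
      (Eventually.of_forall fun n => B.mem_graph (Submodule.inclusion hD ⟨y n, hyD n⟩))
  obtain ⟨⟨φ', hφ⟩, rfl, rfl⟩ := B.mem_graph_iff.mp hgraph
  refine ⟨hφ, mem_closure_of_tendsto (hu.prodMk_nhds hψ) (Eventually.of_forall fun n => ?_)⟩
  exact ⟨⟨y n, hyD n⟩, by simp [w, hAy]⟩

end LinearPMap

theorem LinearMap.IsSymmetric.norm_sq_eq_inner_of_comp_self {H : Type*} [NormedAddCommGroup H]
    [InnerProductSpace ℝ H] {A S : H →ₗ[ℝ] H} (hS : S.IsSymmetric) (hSS : ∀ x, S (S x) = A x)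
    (x : H) : ‖S x‖ ^ 2 = ⟪A x, x⟫ := by
  rw [← hSS, hS, real_inner_self_eq_norm_sq]

theorem mul_norm_le_norm_of_inner_le {H : Type*} [NormedAddCommGroup H] [InnerProductSpace ℝ H]
    {ν : ℝ} {x y : H} (h : ν * ‖x‖ ^ 2 ≤ ⟪y, x⟫) : ν * ‖x‖ ≤ ‖y‖ := by
  have := h.trans (real_inner_le_norm y x)
  rcases (norm_nonneg x).eq_or_lt with hx | hx
  · rw [← hx, mul_zero]
    exact norm_nonneg y
  · nlinarith

theorem stmt5_general {H : Type*} [NormedAddCommGroup H] [InnerProductSpace ℝ H] [CompleteSpace H]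
    (A S : H →ₗ[ℝ] H) (B : H →ₗ.[ℝ] H) (D₁ : Submodule ℝ H) (ν c₃ : ℝ)
    (hν : 0 < ν) (hc₃ : 0 < c₃)
    (hApos : ∀ x : H, ν * ‖x‖ ^ 2 ≤ ⟪A x, x⟫)
    -- S is the positive square root of A
    (hSsym : ∀ x y : H, ⟪S x, y⟫ = ⟪x, S y⟫)
    (hSsq : ∀ x : H, S (S x) = A x)
    -- B is a closed operator whose domain contains D₁
    (hBclosed : IsClosed (B.graph : Set (H × H)))
    (hD₁B : D₁ ≤ B.domain)
    -- (A B φ, B φ) ≤ c₃² ‖A φ‖² for all φ ∈ D₁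
    (hABbound : ∀ x : H, ∀ hx : x ∈ D₁,
      ⟪A (B ⟨x, hD₁B hx⟩), B ⟨x, hD₁B hx⟩⟫ ≤ c₃ ^ 2 * ‖A x‖ ^ 2)
    -- R₁ = A(D₁) is dense in H
    (hdense : Dense (A '' (D₁ : Set H))) :
    ∀ φ : H, ∃ hφ : φ ∈ B.domain, ‖S (B ⟨φ, hφ⟩)‖ ≤ c₃ * ‖A φ‖ := by
  have hS : S.IsSymmetric := hSsym
  have hSnorm := hS.norm_sq_eq_inner_of_comp_self hSsq
  have hSB : ∀ x (hx : x ∈ D₁), ‖S (B ⟨x, hD₁B hx⟩)‖ ≤ c₃ * ‖A x‖ := fun x hx =>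
    le_of_sq_le_sq (by rw [hSnorm, mul_pow]; exact hABbound x hx) (by positivity)
  have hS_lower : ∀ y, √ν * ‖y‖ ≤ ‖S y‖ := fun y =>
    le_of_sq_le_sq (by rw [hSnorm, mul_pow, Real.sq_sqrt hν.le]; exact hApos y) (norm_nonneg _)
  have hB : ∀ x (hx : x ∈ D₁), ‖B ⟨x, hD₁B hx⟩‖ ≤ c₃ / √ν * ‖A x‖ := fun x hx => by
    rw [div_mul_eq_mul_div, le_div_iff₀' (by positivity)]
    exact (hS_lower _).trans (hSB x hx)
  have hclosed : IsClosed {p : H × H | ‖S p.2‖ ≤ c₃ * ‖p.1‖} :=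
    isClosed_le (hS.continuous.comp continuous_snd).norm (by fun_prop)
  intro φ
  obtain ⟨hφ, hmem⟩ := B.exists_mem_closure_range_of_denseImage hBclosed A hD₁B ν⁻¹ _
    (fun x => (le_inv_mul_iff₀ hν).2 (mul_norm_le_norm_of_inner_le (hApos x))) hB hdense φ
  refine ⟨hφ, closure_minimal ?_ hclosed hmem⟩
  rintro _ ⟨⟨x, hx⟩, rfl⟩
  exact hSB x hx

theorem stmt5 {H : Type*} [NormedAddCommGroup H] [InnerProductSpace ℝ H] [CompleteSpace H]
    (A S : H →ₗ[ℝ] H) (B : H →ₗ.[ℝ] H) (D₁ : Submodule ℝ H) (ν c₃ : ℝ)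
    (hν : 0 < ν) (hc₃ : 0 < c₃)
    (hAsym : ∀ x y : H, ⟪A x, y⟫ = ⟪x, A y⟫)
    (hApos : ∀ x : H, ν * ‖x‖ ^ 2 ≤ ⟪A x, x⟫)
    (hAbij : Function.Bijective A)
    -- S is the positive square root of A
    (hSsym : ∀ x y : H, ⟪S x, y⟫ = ⟪x, S y⟫)
    (hSpos : ∀ x : H, 0 ≤ ⟪S x, x⟫)
    (hSsq : ∀ x : H, S (S x) = A x)
    -- B is a closed operator whose domain contains D₁
    (hBclosed : IsClosed (B.graph : Set (H × H)))
    (hD₁B : D₁ ≤ B.domain)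
    -- (A B φ, B φ) ≤ c₃² ‖A φ‖² for all φ ∈ D₁
    (hABbound : ∀ x : H, ∀ hx : x ∈ D₁,
      ⟪A (B ⟨x, hD₁B hx⟩), B ⟨x, hD₁B hx⟩⟫ ≤ c₃ ^ 2 * ‖A x‖ ^ 2)
    -- R₁ = A(D₁) is dense in H
    (hdense : Dense (A '' (D₁ : Set H))) :
    ∀ φ : H, ∃ hφ : φ ∈ B.domain, ‖S (B ⟨φ, hφ⟩)‖ ≤ c₃ * ‖A φ‖ :=
  stmt5_general A S B D₁ ν c₃ hν hc₃ hApos hSsym hSsq hBclosed hD₁B hABbound hdense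
end

section
/- Let {δ_k}_{k=1}^{n} be a sequence of nonnegative reals and {c_i} nonnegative numbers such that δ_{k+1}² ≤ δ_1² + τ Σ_{i=1}^{k} (δ_i + δ_{i+1}) c_i for all k with τ > 0. Then δ_{k+1} ≤ δ_1 + 2τ Σ_{i=1}^{k} c_i. -/
/-!
Let `M` be the largest of `δ 1, …, δ (k + 1)`, attained at `m`. Bounding every `δ i + δ (i + 1)`
in the hypothesis at `m` by `2 M` gives `M² ≤ δ 1 ² + 2 τ M ∑ c i ≤ M (δ 1 + 2 τ ∑ c i)`, and
cancelling one factor `M` bounds `M`, hence `δ (k + 1)`.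
-/

open Finset

theorem le_of_sq_le_mul {α : Type*} [Ring α] [LinearOrder α] [IsStrictOrderedRing α] {a b : α}
    (hb : 0 ≤ b) (h : a ^ 2 ≤ a * b) : a ≤ b := by
  rcases le_or_gt a 0 with ha | ha
  · exact ha.trans hb
  · exact le_of_mul_le_mul_left (by rwa [sq] at h) ha

theorem sum_Icc_add_succ_mul_le {α : Type*} [Semiring α] [PartialOrder α] [IsOrderedRing α]
    {δ c : ℕ → α} {M : α} {n : ℕ} (hM : ∀ i ∈ Icc 1 (n + 1), δ i ≤ M) (hc : ∀ i, 0 ≤ c i) :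
    ∑ i ∈ Icc 1 n, (δ i + δ (i + 1)) * c i ≤ 2 * M * ∑ i ∈ Icc 1 n, c i := by
  rw [mul_sum]
  refine sum_le_sum fun i hi => mul_le_mul_of_nonneg_right ?_ (hc i)
  obtain ⟨hi1, hin⟩ := mem_Icc.mp hi
  rw [two_mul]
  exact add_le_add (hM i (mem_Icc.mpr ⟨hi1, by omega⟩))
    (hM (i + 1) (mem_Icc.mpr ⟨by omega, by omega⟩))

theorem stmt9 (δ c : ℕ → ℝ) (τ : ℝ) (hτ : 0 < τ)
    (hδ : ∀ k, 0 ≤ δ k) (hc : ∀ i, 0 ≤ c i)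
    (hrec : ∀ k, δ (k + 1) ^ 2 ≤
      δ 1 ^ 2 + τ * ∑ i ∈ Finset.Icc 1 k, (δ i + δ (i + 1)) * c i) :
    ∀ k, δ (k + 1) ≤ δ 1 + 2 * τ * ∑ i ∈ Finset.Icc 1 k, c i := by
  intro k
  obtain ⟨m, hm, hmax⟩ := exists_max_image (Icc 1 (k + 1)) δ ⟨1, by simp⟩
  obtain ⟨n, rfl, hnk⟩ : ∃ n, m = n + 1 ∧ n ≤ k := ⟨m - 1, by grind⟩
  set S := ∑ i ∈ Icc 1 k, c i
  have hS : 0 ≤ S := sum_nonneg fun i _ => hc i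
  have hδ1 : δ 1 ≤ δ (n + 1) := hmax 1 (by simp)
  have hpartial : ∑ i ∈ Icc 1 n, c i ≤ S :=
    sum_le_sum_of_subset_of_nonneg (Icc_subset_Icc_right hnk) fun i _ _ => hc i
  have hpairs : ∑ i ∈ Icc 1 n, (δ i + δ (i + 1)) * c i ≤ 2 * δ (n + 1) * S :=
    (sum_Icc_add_succ_mul_le (fun i hi => hmax i (Icc_subset_Icc_right (by omega) hi)) hc).trans
      (mul_le_mul_of_nonneg_left hpartial (by linarith [hδ (n + 1)]))
  have hbound : δ (n + 1) ≤ δ 1 + 2 * τ * S := by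
    refine le_of_sq_le_mul (add_nonneg (hδ 1) (by positivity)) ?_
    calc δ (n + 1) ^ 2 ≤ δ 1 ^ 2 + τ * (2 * δ (n + 1) * S) := by
          linarith [hrec n, mul_le_mul_of_nonneg_left hpairs hτ.le]
      _ ≤ δ (n + 1) * (δ 1 + 2 * τ * S) := by
          linarith [mul_le_mul_of_nonneg_right hδ1 (hδ 1)]
  exact (hmax (k + 1) (by simp)).trans hbound
end

section
/- With notation as in the coefficient recursion for shifted Legendre expansions: if â_m = (ℓ/2) A_m (A_{m−1} ĉ_{m−1} − A_{m+1} ĉ_{m+1}) with A_m = (2m+1)^{−1/2} and Σ_m ĉ_m² ≤ ‖w″‖², then the tail satisfies Σ_{m=N+1}^∞ â_m² ≤ ℓ² / ((2N+1)(2N+5)) · ‖w″‖². -/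
/-!
By `(u - v)² ≤ 2u² + 2v²`, each `â_{m+1}²` is at most
`ℓ²/2 · (ĉ_m² / ((2m+1)(2m+3)) + ĉ_{m+2}² / ((2m+3)(2m+5)))`. For `m ≥ N` these weights are at
most their values at `m = N`, both shifted tails of `Σ ĉ_m²` are at most `M`, and the two weights
at `m = N` add up to `2 / ((2N+1)(2N+5))` by partial fractions.
-/

open Real

lemma sq_scaled_sub_le (ℓ x y : ℝ) {p q r : ℝ} (hp : 0 ≤ p) (hq : 0 ≤ q) (hr : 0 ≤ r) :
    (ℓ / 2 * (1 / √q) * (1 / √p * x - 1 / √r * y)) ^ 2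
      ≤ ℓ ^ 2 / 2 * (x ^ 2 / (p * q) + y ^ 2 / (q * r)) := by
  have inv_sqrt_sq {s : ℝ} (hs : 0 ≤ s) : (1 / √s) ^ 2 = 1 / s := by
    rw [div_pow, one_pow, sq_sqrt hs]
  have hsub : (1 / √p * x - 1 / √r * y) ^ 2 ≤ 2 * (x ^ 2 / p + y ^ 2 / r) := by
    have := add_sq_le (a := 1 / √p * x) (b := -(1 / √r * y))
    rw [← sub_eq_add_neg, neg_sq, mul_pow, mul_pow, inv_sqrt_sq hp, inv_sqrt_sq hr] at this
    simpa only [one_div_mul_eq_div] using this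
  calc (ℓ / 2 * (1 / √q) * (1 / √p * x - 1 / √r * y)) ^ 2
      = ℓ ^ 2 / 4 * (1 / q) * (1 / √p * x - 1 / √r * y) ^ 2 := by
        rw [mul_pow, mul_pow, inv_sqrt_sq hq]; ring
    _ ≤ ℓ ^ 2 / 4 * (1 / q) * (2 * (x ^ 2 / p + y ^ 2 / r)) := by gcongr
    _ = ℓ ^ 2 / 2 * (x ^ 2 / (p * q) + y ^ 2 / (q * r)) := by
        rw [div_mul_eq_div_div, div_mul_eq_div_div_swap]; ring

lemma sq_coeff_le_of_le (ℓ x y : ℝ) {n t : ℝ} (hn : 0 ≤ n) (hnt : n ≤ t) :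
    (ℓ / 2 * (1 / √(2 * (t + 1) + 1)) *
        (1 / √(2 * t + 1) * x - 1 / √(2 * (t + 2) + 1) * y)) ^ 2
      ≤ ℓ ^ 2 / 2 * (x ^ 2 / ((2 * n + 1) * (2 * n + 3)) +
          y ^ 2 / ((2 * n + 3) * (2 * n + 5))) := by
  refine (sq_scaled_sub_le ℓ x y (by linarith) (by linarith) (by linarith)).trans ?_
  have h₁ : (2 * n + 1) * (2 * n + 3) ≤ (2 * t + 1) * (2 * (t + 1) + 1) := by nlinarith
  have h₂ : (2 * n + 3) * (2 * n + 5) ≤ (2 * (t + 1) + 1) * (2 * (t + 2) + 1) := by nlinarith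
  gcongr

lemma tsum_nat_add_le_tsum {f : ℕ → ℝ} (hf : Summable f) (hf₀ : ∀ n, 0 ≤ f n) (k : ℕ) :
    ∑' n, f (n + k) ≤ ∑' n, f n :=
  tsum_comp_le_tsum_of_inj hf hf₀ (add_left_injective k)

theorem stmt17_general (ℓ M : ℝ) (a c : ℕ → ℝ) (N : ℕ)
    (hrel : ∀ m : ℕ, a (m + 1) =
      (ℓ / 2) * (1 / Real.sqrt (2 * (m + 1 : ℝ) + 1)) *
        ((1 / Real.sqrt (2 * (m : ℝ) + 1)) * c m -
          (1 / Real.sqrt (2 * (m + 2 : ℝ) + 1)) * c (m + 2)))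
    (hsum : Summable (fun m => c m ^ 2)) (hbound : ∑' m, c m ^ 2 ≤ M) :
    ∑' m : ℕ, a (m + (N + 1)) ^ 2 ≤
      ℓ ^ 2 / ((2 * (N : ℝ) + 1) * (2 * (N : ℝ) + 5)) * M := by
  set D₁ : ℝ := (2 * N + 1) * (2 * N + 3)
  set D₂ : ℝ := (2 * N + 3) * (2 * N + 5)
  have hs₁ : Summable fun m => c (m + N) ^ 2 := hsum.comp_injective (add_left_injective N)
  have hs₂ : Summable fun m => c (m + (N + 2)) ^ 2 := hsum.comp_injective (add_left_injective (N + 2))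
  have hpt (m : ℕ) :
      a (m + (N + 1)) ^ 2 ≤ ℓ ^ 2 / 2 * (c (m + N) ^ 2 / D₁ + c (m + (N + 2)) ^ 2 / D₂) := by
    rw [← add_assoc, hrel]
    exact sq_coeff_le_of_le ℓ _ _ N.cast_nonneg (by exact_mod_cast N.le_add_left m)
  have hsg : Summable fun m => ℓ ^ 2 / 2 * (c (m + N) ^ 2 / D₁ + c (m + (N + 2)) ^ 2 / D₂) :=
    ((hs₁.div_const _).add (hs₂.div_const _)).mul_left _
  calc ∑' m, a (m + (N + 1)) ^ 2
      ≤ ∑' m, ℓ ^ 2 / 2 * (c (m + N) ^ 2 / D₁ + c (m + (N + 2)) ^ 2 / D₂) :=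
        (hsg.of_nonneg_of_le (fun _ => sq_nonneg _) hpt).tsum_le_tsum hpt hsg
    _ = ℓ ^ 2 / 2 * ((∑' m, c (m + N) ^ 2) / D₁ + (∑' m, c (m + (N + 2)) ^ 2) / D₂) := by
        rw [tsum_mul_left, (hs₁.div_const _).tsum_add (hs₂.div_const _), tsum_div_const,
          tsum_div_const]
    _ ≤ ℓ ^ 2 / 2 * (M / D₁ + M / D₂) := by
        gcongr <;> exact (tsum_nat_add_le_tsum hsum (fun _ => sq_nonneg _) _).trans hbound
    _ = ℓ ^ 2 / ((2 * N + 1) * (2 * N + 5)) * M := by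
        simp only [D₁, D₂]
        field_simp
        ring

theorem stmt17 (ℓ M : ℝ) (hℓ : 0 < ℓ) (hM : 0 ≤ M) (a c : ℕ → ℝ) (N : ℕ) (hN : 1 ≤ N)
    (hrel : ∀ m : ℕ, a (m + 1) =
      (ℓ / 2) * (1 / Real.sqrt (2 * (m + 1 : ℝ) + 1)) *
        ((1 / Real.sqrt (2 * (m : ℝ) + 1)) * c m -
          (1 / Real.sqrt (2 * (m + 2 : ℝ) + 1)) * c (m + 2)))
    (hsum : Summable (fun m => c m ^ 2)) (hbound : ∑' m, c m ^ 2 ≤ M) :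
    ∑' m : ℕ, a (m + (N + 1)) ^ 2 ≤
      ℓ ^ 2 / ((2 * (N : ℝ) + 1) * (2 * (N : ℝ) + 5)) * M :=
  stmt17_general ℓ M a c N hrel hsum hbound
end

section
/- Consider the two-point boundary value problem (p(x)w′)′ − q(x)w = f on (0,ℓ) with w(0) = w(ℓ) = 0, where p ∈ C¹([0,ℓ]) with p ≥ p₀ > 0, q continuous with q ≥ q₀ > 0, and f continuous. Then the classical solution w satisfies ‖w′‖ ≤ (ℓ/(π p₀)) ‖f‖ and ‖w‖ ≤ (ℓ²/(π² p₀)) ‖f‖, where ‖·‖ denotes the L²(0,ℓ) norm. -/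
/-!
Multiplying the equation by `w` and integrating by parts gives the energy identity
`∫ p w'² + ∫ q w² + ∫ f w = 0`. Since `p ≥ p₀` and `q ≥ 0`, Cauchy–Schwarz yields
`p₀ ‖w'‖² ≤ ‖f‖ ‖w‖`, and Steklov's inequality `‖w‖ ≤ (ℓ/π) ‖w'‖` turns this into both bounds.

Steklov's inequality is proved with `c = π/ℓ` and the function `F = c cot(c x) w²`: on `(0, ℓ)`
one has `F' = w'² - c² w² - (w' - c w cot(c x))²`, and `F` extends continuously by `0` to both
endpoints because `w` vanishes there to first order. Hence `∫₀ˣ (w'² - c² w²) - F` is monotone on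
`[0, ℓ]`, which gives `c² ‖w‖² ≤ ‖w'‖²`.
-/

open Filter Set Real intervalIntegral Topology

lemma continuousAt_sq_div_of_hasDerivAt {u v : ℝ → ℝ} {a du dv : ℝ} (hu : HasDerivAt u du a)
    (hv : HasDerivAt v dv a) (hua : u a = 0) (hva : v a = 0) (hdv : dv ≠ 0) :
    ContinuousAt (fun x => u x ^ 2 / v x) a := by
  rw [← continuousWithinAt_compl_self, ContinuousWithinAt, hua, hva, div_zero]
  have hlim : Tendsto (fun x => u x * (slope u a x / slope v a x)) (𝓝[≠] a) (𝓝 (u a * (du / dv))) :=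
    (hu.continuousAt.tendsto.mono_left nhdsWithin_le_nhds).mul
      ((hasDerivAt_iff_tendsto_slope.mp hu).div (hasDerivAt_iff_tendsto_slope.mp hv) hdv)
  rw [hua, zero_mul] at hlim
  refine hlim.congr' ?_
  filter_upwards [self_mem_nhdsWithin] with x hx
  rw [slope_def_field, slope_def_field, hua, hva, sub_zero, sub_zero,
    div_div_div_cancel_right₀ (sub_ne_zero.mpr hx), ← mul_div_assoc, sq]

lemma continuousAt_mul_cos_mul_sq_div_sin {w : ℝ → ℝ} {a c d : ℝ} (hw : HasDerivAt w d a)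
    (hwa : w a = 0) (hc : c ≠ 0) (hsin : sin (c * a) = 0) :
    ContinuousAt (fun x => c * cos (c * x) * (w x ^ 2 / sin (c * x))) a := by
  have hmul : HasDerivAt (fun x => c * x) c a := by simpa using (hasDerivAt_id a).const_mul c
  have hcos : cos (c * a) ≠ 0 := by
    intro h; have := sin_sq_add_cos_sq (c * a); rw [hsin, h] at this; norm_num at this
  refine ContinuousAt.mul (by fun_prop) (continuousAt_sq_div_of_hasDerivAt hw
    ((hasDerivAt_sin (c * a)).comp a hmul) hwa hsin (mul_ne_zero hcos hc))

lemma hasDerivAt_mul_cos_mul_sq_div_sin {w : ℝ → ℝ} {c x w' : ℝ} (hw : HasDerivAt w w' x)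
    (hsin : sin (c * x) ≠ 0) :
    HasDerivAt (fun y => c * cos (c * y) * (w y ^ 2 / sin (c * y)))
      (w' ^ 2 - c ^ 2 * w x ^ 2 - (w' - c * w x * cos (c * x) / sin (c * x)) ^ 2) x := by
  have hmul : HasDerivAt (fun y => c * y) c x := by simpa using (hasDerivAt_id x).const_mul c
  have := (((hasDerivAt_cos (c * x)).comp x hmul).const_mul c).mul
    ((hw.pow 2).div ((hasDerivAt_sin (c * x)).comp x hmul) hsin)
  refine this.congr_deriv ?_
  simp only [Function.comp_apply, Pi.pow_apply, Pi.div_apply]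
  field_simp
  ring

theorem steklov_inequality {ℓ : ℝ} (hℓ : 0 < ℓ) {w w' : ℝ → ℝ} (hw : ∀ x, HasDerivAt w (w' x) x)
    (hw'c : Continuous w') (h0 : w 0 = 0) (hl : w ℓ = 0) :
    (π / ℓ) ^ 2 * ∫ x in 0..ℓ, w x ^ 2 ≤ ∫ x in 0..ℓ, w' x ^ 2 := by
  set c := π / ℓ
  have hcpos : 0 < c := div_pos pi_pos hℓ
  have hcℓ : c * ℓ = π := div_mul_cancel₀ _ hℓ.ne'
  have hwc : Continuous w := Differentiable.continuous fun x => (hw x).differentiableAt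
  have hhc : Continuous fun x => w' x ^ 2 - c ^ 2 * w x ^ 2 := by fun_prop
  set F : ℝ → ℝ := fun x => c * cos (c * x) * (w x ^ 2 / sin (c * x))
  have hsin : ∀ x ∈ Ioo 0 ℓ, sin (c * x) ≠ 0 := fun x hx =>
    (sin_pos_of_pos_of_lt_pi (mul_pos hcpos hx.1)
      (hcℓ ▸ mul_lt_mul_of_pos_left hx.2 hcpos)).ne'
  have hFc : ContinuousOn F (Icc 0 ℓ) := by
    intro x hx
    refine ContinuousAt.continuousWithinAt ?_
    rcases eq_endpoints_or_mem_Ioo_of_mem_Icc hx with rfl | rfl | hx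
    · exact continuousAt_mul_cos_mul_sq_div_sin (hw 0) h0 hcpos.ne' (by simp)
    · exact continuousAt_mul_cos_mul_sq_div_sin (hw x) hl hcpos.ne' (by rw [hcℓ, sin_pi])
    · exact (hasDerivAt_mul_cos_mul_sq_div_sin (hw x) (hsin x hx)).continuousAt
  have hmono :
      MonotoneOn (fun x => (∫ t in 0..x, (w' t ^ 2 - c ^ 2 * w t ^ 2)) - F x) (Icc 0 ℓ) := by
    refine monotoneOn_of_hasDerivWithinAt_nonneg (convex_Icc 0 ℓ)
      ((continuous_primitive hhc.intervalIntegrable 0).continuousOn.sub hFc) (fun x hx => ?_)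
      (f' := fun x => (w' x - c * w x * cos (c * x) / sin (c * x)) ^ 2) (fun _ _ => sq_nonneg _)
    rw [interior_Icc] at hx
    exact (((hhc.integral_hasStrictDerivAt 0 x).hasDerivAt.sub
      (hasDerivAt_mul_cos_mul_sq_div_sin (hw x) (hsin x hx))).congr_deriv
      (by ring)).hasDerivWithinAt
  have hsplit : ∫ t in 0..ℓ, (w' t ^ 2 - c ^ 2 * w t ^ 2)
      = (∫ t in 0..ℓ, w' t ^ 2) - c ^ 2 * ∫ t in 0..ℓ, w t ^ 2 := by
    rw [integral_sub
      ((by fun_prop : Continuous fun t => w' t ^ 2).intervalIntegrable 0 ℓ)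
      ((by fun_prop : Continuous fun t => c ^ 2 * w t ^ 2).intervalIntegrable 0 ℓ),
      integral_const_mul]
  have := hmono (left_mem_Icc.2 hℓ.le) (right_mem_Icc.2 hℓ.le) hℓ.le
  simp only [F, integral_same, h0, hl, hsplit, ne_eq, OfNat.ofNat_ne_zero, not_false_eq_true,
    zero_pow, zero_div, mul_zero, sub_zero] at this
  linarith

theorem abs_integral_mul_le_sqrt_mul_sqrt {a b : ℝ} (hab : a ≤ b) {f g : ℝ → ℝ}
    (hf : Continuous f) (hg : Continuous g) :
    |∫ x in a..b, f x * g x| ≤ √(∫ x in a..b, f x ^ 2) * √(∫ x in a..b, g x ^ 2) := by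
  have hquad : ∀ t : ℝ, 0 ≤ (∫ x in a..b, g x ^ 2) * (t * t) +
      (2 * ∫ x in a..b, f x * g x) * t + ∫ x in a..b, f x ^ 2 := fun t => by
    have hexpand : ∫ x in a..b, (f x + t * g x) ^ 2 = (∫ x in a..b, g x ^ 2) * (t * t) +
        (2 * ∫ x in a..b, f x * g x) * t + ∫ x in a..b, f x ^ 2 := by
      have hpoly : (fun x => (f x + t * g x) ^ 2)
          = fun x => t * t * g x ^ 2 + 2 * t * (f x * g x) + f x ^ 2 := by
        funext x; ring
      rw [hpoly, integral_add, integral_add, integral_const_mul, integral_const_mul]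
      · ring
      all_goals exact Continuous.intervalIntegrable (by fun_prop) a b
    exact hexpand ▸ integral_nonneg hab fun x _ => sq_nonneg _
  have hdisc := discrim_le_zero hquad
  unfold discrim at hdisc
  rw [← sqrt_mul (integral_nonneg hab fun x _ => sq_nonneg _), ← sqrt_sq_eq_abs]
  exact sqrt_le_sqrt (by nlinarith)

theorem sqrt_integral_sq_le_div_pi_mul_sqrt {ℓ : ℝ} (hℓ : 0 < ℓ) {w w' : ℝ → ℝ}
    (hw : ∀ x, HasDerivAt w (w' x) x) (hw'c : Continuous w') (h0 : w 0 = 0) (hl : w ℓ = 0) :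
    √(∫ x in 0..ℓ, w x ^ 2) ≤ ℓ / π * √(∫ x in 0..ℓ, w' x ^ 2) := by
  have hsteklov := steklov_inequality hℓ hw hw'c h0 hl
  rw [← sqrt_sq (by positivity : 0 ≤ ℓ / π), ← sqrt_mul (sq_nonneg _)]
  refine sqrt_le_sqrt ?_
  rw [div_pow, div_mul_eq_mul_div, div_le_iff₀ (by positivity)] at hsteklov
  rw [div_pow, div_mul_eq_mul_div, le_div_iff₀ (by positivity)]
  linarith

theorem integral_energy_eq_zero {ℓ : ℝ} (hℓ : 0 ≤ ℓ) {p p' q f w w' w'' : ℝ → ℝ}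
    (hp : ∀ x, HasDerivAt p (p' x) x) (hw : ∀ x, HasDerivAt w (w' x) x)
    (hw' : ∀ x, HasDerivAt w' (w'' x) x) (hp'c : Continuous p') (hqc : Continuous q)
    (hfc : Continuous f) (hw''c : Continuous w'')
    (hode : ∀ x ∈ Icc 0 ℓ, p' x * w' x + p x * w'' x - q x * w x = f x)
    (h0 : w 0 = 0) (hl : w ℓ = 0) :
    (∫ x in 0..ℓ, p x * w' x ^ 2) + (∫ x in 0..ℓ, q x * w x ^ 2) + ∫ x in 0..ℓ, f x * w x = 0 := by
  have hwc : Continuous w := Differentiable.continuous fun x => (hw x).differentiableAt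
  have hw'c : Continuous w' := Differentiable.continuous fun x => (hw' x).differentiableAt
  have hpc : Continuous p := Differentiable.continuous fun x => (hp x).differentiableAt
  have hibp := integral_mul_deriv_eq_deriv_mul (u := w) (v := fun x => p x * w' x)
    (fun x _ => hw x) (fun x _ => (hp x).mul (hw' x)) (hw'c.intervalIntegrable 0 ℓ)
    ((by fun_prop : Continuous fun x => p' x * w' x + p x * w'' x).intervalIntegrable 0 ℓ)
  rw [h0, hl, zero_mul, zero_mul, sub_zero, zero_sub] at hibp
  have hlhs : ∫ x in 0..ℓ, w x * (p' x * w' x + p x * w'' x)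
      = ∫ x in 0..ℓ, (q x * w x ^ 2 + f x * w x) := by
    refine integral_congr fun x hx => ?_
    rw [uIcc_of_le hℓ] at hx
    linear_combination w x * hode x hx
  have hrhs : ∫ x in 0..ℓ, w' x * (p x * w' x) = ∫ x in 0..ℓ, p x * w' x ^ 2 :=
    integral_congr fun x _ => by ring
  rw [hlhs, hrhs,
    integral_add ((by fun_prop : Continuous fun x => q x * w x ^ 2).intervalIntegrable 0 ℓ)
      ((by fun_prop : Continuous fun x => f x * w x).intervalIntegrable 0 ℓ)] at hibp
  linarith

theorem mul_integral_deriv_sq_le_sqrt_mul_sqrt {ℓ p₀ : ℝ} (hℓ : 0 ≤ ℓ)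
    {p p' q f w w' w'' : ℝ → ℝ}
    (hp : ∀ x, HasDerivAt p (p' x) x) (hw : ∀ x, HasDerivAt w (w' x) x)
    (hw' : ∀ x, HasDerivAt w' (w'' x) x) (hp'c : Continuous p') (hqc : Continuous q)
    (hfc : Continuous f) (hw''c : Continuous w'')
    (hpl : ∀ x ∈ Icc 0 ℓ, p₀ ≤ p x) (hq : ∀ x ∈ Icc 0 ℓ, 0 ≤ q x)
    (hode : ∀ x ∈ Icc 0 ℓ, p' x * w' x + p x * w'' x - q x * w x = f x)
    (h0 : w 0 = 0) (hl : w ℓ = 0) :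
    p₀ * ∫ x in 0..ℓ, w' x ^ 2 ≤ √(∫ x in 0..ℓ, f x ^ 2) * √(∫ x in 0..ℓ, w x ^ 2) := by
  have hwc : Continuous w := Differentiable.continuous fun x => (hw x).differentiableAt
  have hw'c : Continuous w' := Differentiable.continuous fun x => (hw' x).differentiableAt
  have hpc : Continuous p := Differentiable.continuous fun x => (hp x).differentiableAt
  have henergy := integral_energy_eq_zero hℓ hp hw hw' hp'c hqc hfc hw''c hode h0 hl
  have hcoercive : p₀ * ∫ x in 0..ℓ, w' x ^ 2 ≤ ∫ x in 0..ℓ, p x * w' x ^ 2 := by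
    rw [← integral_const_mul]
    exact integral_mono_on hℓ
      ((by fun_prop : Continuous fun x => p₀ * w' x ^ 2).intervalIntegrable 0 ℓ)
      ((by fun_prop : Continuous fun x => p x * w' x ^ 2).intervalIntegrable 0 ℓ)
      fun x hx => mul_le_mul_of_nonneg_right (hpl x hx) (sq_nonneg _)
  have hqw : 0 ≤ ∫ x in 0..ℓ, q x * w x ^ 2 :=
    integral_nonneg hℓ fun x hx => mul_nonneg (hq x hx) (sq_nonneg _)
  have hcs := abs_integral_mul_le_sqrt_mul_sqrt hℓ hfc hwc
  linarith [neg_le_abs (∫ x in 0..ℓ, f x * w x)]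

theorem stmt18 (ℓ p₀ q₀ : ℝ) (hℓ : 0 < ℓ) (hp₀ : 0 < p₀) (hq₀ : 0 < q₀)
    (p p' q f w w' w'' : ℝ → ℝ)
    (hp : ∀ x, HasDerivAt p (p' x) x)
    (hw : ∀ x, HasDerivAt w (w' x) x) (hw' : ∀ x, HasDerivAt w' (w'' x) x)
    (hp'c : Continuous p') (hqc : Continuous q) (hfc : Continuous f)
    (hw''c : Continuous w'')
    (hpl : ∀ x ∈ Set.Icc (0 : ℝ) ℓ, p₀ ≤ p x)
    (hql : ∀ x ∈ Set.Icc (0 : ℝ) ℓ, q₀ ≤ q x)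
    (hode : ∀ x ∈ Set.Icc (0 : ℝ) ℓ, p' x * w' x + p x * w'' x - q x * w x = f x)
    (h0 : w 0 = 0) (hl : w ℓ = 0) :
    Real.sqrt (∫ x in (0 : ℝ)..ℓ, (w' x) ^ 2) ≤
        ℓ / (Real.pi * p₀) * Real.sqrt (∫ x in (0 : ℝ)..ℓ, (f x) ^ 2) ∧
      Real.sqrt (∫ x in (0 : ℝ)..ℓ, (w x) ^ 2) ≤
        ℓ ^ 2 / (Real.pi ^ 2 * p₀) * Real.sqrt (∫ x in (0 : ℝ)..ℓ, (f x) ^ 2) := by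
  have hw'c : Continuous w' := Differentiable.continuous fun x => (hw' x).differentiableAt
  have henergy := mul_integral_deriv_sq_le_sqrt_mul_sqrt hℓ.le hp hw hw' hp'c hqc hfc hw''c hpl
    (fun x hx => hq₀.le.trans (hql x hx)) hode h0 hl
  have hsteklov := sqrt_integral_sq_le_div_pi_mul_sqrt hℓ hw hw'c h0 hl
  have hA : √(∫ x in 0..ℓ, w' x ^ 2) ^ 2 = ∫ x in 0..ℓ, w' x ^ 2 :=
    sq_sqrt (integral_nonneg hℓ.le fun x _ => sq_nonneg _)
  set a := √(∫ x in 0..ℓ, w' x ^ 2)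
  set Φ := √(∫ x in 0..ℓ, f x ^ 2)
  have hderiv : a ≤ ℓ / (π * p₀) * Φ := by
    obtain ha | ha := (show 0 ≤ a from sqrt_nonneg _).eq_or_lt
    · rw [← ha]; positivity
    rw [← hA] at henergy
    rw [div_mul_eq_mul_div, le_div_iff₀ pi_pos] at hsteklov
    rw [div_mul_eq_mul_div, le_div_iff₀ (by positivity)]
    refine le_of_mul_le_mul_right ?_ ha
    nlinarith [mul_le_mul_of_nonneg_left henergy pi_pos.le,
      mul_le_mul_of_nonneg_left hsteklov (show 0 ≤ Φ from sqrt_nonneg _)]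
  refine ⟨hderiv, hsteklov.trans ?_⟩
  calc ℓ / π * a ≤ ℓ / π * (ℓ / (π * p₀) * Φ) := by gcongr
    _ = ℓ ^ 2 / (π ^ 2 * p₀) * Φ := by field_simp
end

section
/- Under the hypotheses of the preceding Sturm–Liouville problem, the second derivative of the solution satisfies ‖w″‖ ≤ b̂₁ ‖f‖ in L²(0,ℓ), where b̂₁ = p₀^{−2} ( (ℓ/π) max|p′| + (ℓ²/π²) max q + p₀ ). -/
/-!
Multiplying the equation by `w` and integrating by parts gives the energy estimate
`p₀ ‖w'‖² ≤ -∫ f w ≤ ‖f‖ ‖w‖`. Wirtinger's inequality `‖w‖ ≤ (ℓ/π) ‖w'‖` then yields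
`‖w'‖ ≤ ℓ/(π p₀) ‖f‖` and `‖w‖ ≤ ℓ²/(π² p₀) ‖f‖`. Finally `p w'' = f + q w - p' w'`, so Minkowski's
inequality gives `p₀ ‖w''‖ ≤ ‖f‖ + (max q) ‖w‖ + (max |p'|) ‖w'‖`.

Wirtinger's inequality comes from the identity
`w'² - c²w² = (w' - c cot(cx) w)² + c (cot(cx) w²)'` with `c = π/ℓ`: the boundary term
`cot(cx) w²` vanishes at both ends because `w = O(x)` at `0` and `w = O(ℓ - x)` at `ℓ`.
-/

open Real Set intervalIntegral

lemma continuous_of_forall_hasDerivAt {f f' : ℝ → ℝ} (h : ∀ x, HasDerivAt f (f' x) x) :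
    Continuous f :=
  continuous_iff_continuousAt.2 fun x ↦ (h x).continuousAt

noncomputable def intervalL2Norm (a b : ℝ) (g : ℝ → ℝ) : ℝ := √(∫ x in a..b, g x ^ 2)

section IntervalL2Norm

variable {a b : ℝ} {g h : ℝ → ℝ}

/-- Stated in the shape expected by `discrim_le_zero`. -/
lemma integral_mul_add_sq (hg : Continuous g) (hh : Continuous h) (t : ℝ) :
    ∫ x in a..b, (t * g x + h x) ^ 2 =
      (∫ x in a..b, g x ^ 2) * (t * t) + 2 * (∫ x in a..b, g x * h x) * t
        + ∫ x in a..b, h x ^ 2 := by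
  have hgg : IntervalIntegrable (fun x ↦ g x ^ 2 * (t * t)) MeasureTheory.volume a b :=
    (by fun_prop : Continuous _).intervalIntegrable a b
  have hgh : IntervalIntegrable (fun x ↦ 2 * (g x * h x) * t) MeasureTheory.volume a b :=
    (by fun_prop : Continuous _).intervalIntegrable a b
  calc ∫ x in a..b, (t * g x + h x) ^ 2
      = ∫ x in a..b, (g x ^ 2 * (t * t) + 2 * (g x * h x) * t + h x ^ 2) :=
        integral_congr fun x _ ↦ by ring
    _ = _ := by
      rw [integral_add (hgg.add hgh) ((hh.fun_pow 2).intervalIntegrable a b), integral_add hgg hgh,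
        integral_mul_const, integral_mul_const, integral_const_mul]

namespace intervalL2Norm

lemma nonneg : 0 ≤ intervalL2Norm a b g := sqrt_nonneg _

lemma sq_eq (hab : a ≤ b) : intervalL2Norm a b g ^ 2 = ∫ x in a..b, g x ^ 2 :=
  sq_sqrt (integral_nonneg hab fun _ _ ↦ sq_nonneg _)

theorem abs_integral_mul_le (hab : a ≤ b) (hg : Continuous g) (hh : Continuous h) :
    |∫ x in a..b, g x * h x| ≤ intervalL2Norm a b g * intervalL2Norm a b h := by
  have hdiscr := discrim_le_zero fun t ↦ (integral_mul_add_sq (a := a) (b := b) hg hh t).symm ▸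
    integral_nonneg hab fun x _ ↦ sq_nonneg (t * g x + h x)
  rw [intervalL2Norm, intervalL2Norm, ← sqrt_mul (integral_nonneg hab fun _ _ ↦ sq_nonneg _)]
  refine abs_le_sqrt ?_
  unfold discrim at hdiscr
  linarith

theorem add_le (hab : a ≤ b) (hg : Continuous g) (hh : Continuous h) :
    intervalL2Norm a b (fun x ↦ g x + h x) ≤ intervalL2Norm a b g + intervalL2Norm a b h := by
  have hcs := (le_abs_self _).trans (abs_integral_mul_le hab hg hh)
  have hexp := integral_mul_add_sq (a := a) (b := b) hg hh 1
  simp only [one_mul, mul_one] at hexp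
  rw [intervalL2Norm, sqrt_le_iff, hexp, add_sq, sq_eq hab, sq_eq hab]
  exact ⟨add_nonneg nonneg nonneg, by linarith⟩

lemma const_mul (c : ℝ) : intervalL2Norm a b (fun x ↦ c * g x) = |c| * intervalL2Norm a b g := by
  simp only [intervalL2Norm, mul_pow, integral_const_mul]
  rw [sqrt_mul (sq_nonneg c), sqrt_sq_eq_abs]

lemma le_of_abs_le (hab : a ≤ b) (hg : Continuous g) (hh : Continuous h)
    (hgh : ∀ x ∈ Icc a b, |g x| ≤ |h x|) : intervalL2Norm a b g ≤ intervalL2Norm a b h :=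
  sqrt_le_sqrt <| integral_mono_on hab ((hg.pow 2).intervalIntegrable a b)
    ((hh.pow 2).intervalIntegrable a b) fun x hx ↦ sq_le_sq.2 (hgh x hx)

lemma mul_le (hab : a ≤ b) (hg : Continuous g) (hh : Continuous h) {C : ℝ}
    (hC : ∀ x ∈ Icc a b, |g x| ≤ C) :
    intervalL2Norm a b (fun x ↦ g x * h x) ≤ C * intervalL2Norm a b h := by
  have hC₀ : 0 ≤ C := (abs_nonneg _).trans (hC a ⟨le_rfl, hab⟩)
  calc intervalL2Norm a b (fun x ↦ g x * h x)
      ≤ intervalL2Norm a b (fun x ↦ C * h x) :=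
        le_of_abs_le hab (hg.mul hh) (continuous_const.mul hh) fun x hx ↦ by
          rw [abs_mul, abs_mul, abs_of_nonneg hC₀]
          exact mul_le_mul_of_nonneg_right (hC x hx) (abs_nonneg _)
    _ = C * intervalL2Norm a b h := by rw [const_mul, abs_of_nonneg hC₀]

end intervalL2Norm

end IntervalL2Norm

lemma Real.hasDerivAt_cot {x : ℝ} (hx : sin x ≠ 0) : HasDerivAt cot (-1 / sin x ^ 2) x := by
  have hcot : cot = fun y ↦ cos y / sin y := funext fun _ ↦ cot_eq_cos_div_sin _
  rw [hcot]
  refine ((hasDerivAt_cos x).div (hasDerivAt_sin x) hx).congr_deriv ?_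
  linear_combination (-1 / sin x ^ 2) * sin_sq_add_cos_sq x

lemma Real.cot_pi_sub (x : ℝ) : cot (π - x) = -cot x := by
  rw [cot_eq_cos_div_sin, cot_eq_cos_div_sin, cos_pi_sub, sin_pi_sub, neg_div]

lemma Real.cot_le_inv {x : ℝ} (hx₀ : 0 < x) (hxπ : x < π) : cot x ≤ x⁻¹ := by
  have hsin := sin_pos_of_pos_of_lt_pi hx₀ hxπ
  rw [cot_eq_cos_div_sin, div_le_iff₀ hsin, inv_mul_eq_div, le_div_iff₀ hx₀]
  rcases le_or_gt (cos x) 0 with hcos | hcos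
  · nlinarith
  · have hx : x < π / 2 := by
      by_contra! h
      exact hcos.not_ge (cos_nonpos_of_pi_div_two_le_of_le h (by linarith))
    have := lt_tan hx₀ hx
    rw [tan_eq_sin_div_cos, lt_div_iff₀ hcos] at this
    linarith

lemma mul_cot_mul_mul_sq_le {c ε t K : ℝ} (hc : 0 < c) (hε : 0 < ε) (hcε : c * ε < π)
    (ht : |t| ≤ K * ε) : c * cot (c * ε) * t ^ 2 ≤ K ^ 2 * ε := by
  have hcot := mul_le_mul_of_nonneg_left (cot_le_inv (by positivity) hcε) hc.le
  rw [mul_inv, ← mul_assoc, mul_inv_cancel₀ hc.ne', one_mul] at hcot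
  have ht2 : t ^ 2 ≤ (K * ε) ^ 2 := sq_le_sq' (abs_le.1 ht).1 (abs_le.1 ht).2
  calc c * cot (c * ε) * t ^ 2 ≤ ε⁻¹ * (K * ε) ^ 2 :=
        mul_le_mul hcot ht2 (sq_nonneg _) (by positivity)
    _ = K ^ 2 * ε := by field_simp

lemma monotoneOn_primitive_sub_cot_mul_sq {c ℓ : ℝ} {w w' : ℝ → ℝ} (hc : 0 < c)
    (hcℓ : c * ℓ ≤ π) (hw : ∀ x, HasDerivAt w (w' x) x) (hw'c : Continuous w') :
    MonotoneOn (fun x ↦ (∫ y in (0 : ℝ)..x, (w' y ^ 2 - c ^ 2 * w y ^ 2))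
      - c * (cot (c * x) * w x ^ 2)) (Ioo 0 ℓ) := by
  have hwc : Continuous w := continuous_of_forall_hasDerivAt hw
  have hgc : Continuous fun y ↦ w' y ^ 2 - c ^ 2 * w y ^ 2 := by fun_prop
  have hderiv : ∀ x ∈ Ioo 0 ℓ, HasDerivAt (fun x ↦ (∫ y in (0 : ℝ)..x, (w' y ^ 2 - c ^ 2 * w y ^ 2))
      - c * (cot (c * x) * w x ^ 2)) ((w' x - c * cot (c * x) * w x) ^ 2) x := by
    intro x hx
    have hsin : sin (c * x) ≠ 0 := (sin_pos_of_pos_of_lt_pi (by nlinarith [hx.1])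
      (by nlinarith [hx.2])).ne'
    have hcot : HasDerivAt (fun x ↦ cot (c * x)) (-1 / sin (c * x) ^ 2 * c) x :=
      ((hasDerivAt_cot hsin).comp x ((hasDerivAt_id x).const_mul c)).congr_deriv (by ring)
    refine ((hgc.integral_hasStrictDerivAt 0 x).hasDerivAt.sub
      ((hcot.mul ((hw x).fun_pow 2)).const_mul c)).congr_deriv ?_
    rw [cot_eq_cos_div_sin]
    field_simp
    linear_combination (-c ^ 2 * w x ^ 2) * sin_sq_add_cos_sq (c * x)
  refine monotoneOn_of_hasDerivWithinAt_nonneg (f' := fun x ↦ (w' x - c * cot (c * x) * w x) ^ 2)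
    (convex_Ioo 0 ℓ) (fun x hx ↦ (hderiv x hx).continuousAt.continuousWithinAt) ?_
    fun _ _ ↦ sq_nonneg _
  rw [interior_Ioo]
  exact fun x hx ↦ (hderiv x hx).hasDerivWithinAt

open Filter Topology in
theorem integral_sq_le_wirtinger {ℓ : ℝ} (hℓ : 0 < ℓ) {w w' : ℝ → ℝ}
    (hw : ∀ x, HasDerivAt w (w' x) x) (hw'c : Continuous w') (h0 : w 0 = 0) (hℓ0 : w ℓ = 0) :
    ∫ x in (0 : ℝ)..ℓ, w x ^ 2 ≤ (ℓ / π) ^ 2 * ∫ x in (0 : ℝ)..ℓ, w' x ^ 2 := by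
  set c := π / ℓ
  have hc : 0 < c := by positivity
  have hcℓ : c * ℓ = π := div_mul_cancel₀ π hℓ.ne'
  have hwc : Continuous w := continuous_of_forall_hasDerivAt hw
  set G := fun x ↦ ∫ y in (0 : ℝ)..x, (w' y ^ 2 - c ^ 2 * w y ^ 2)
  have hGc : Continuous G :=
    continuous_primitive (fun a b ↦ (by fun_prop : Continuous _).intervalIntegrable a b) 0
  obtain ⟨K, hK⟩ := isCompact_Icc.exists_bound_of_continuousOn (hw'c.continuousOn (s := Icc 0 ℓ))
  have hlip : ∀ x ∈ Icc 0 ℓ, ∀ y ∈ Icc 0 ℓ, |w y - w x| ≤ K * |y - x| := fun x hx y hy ↦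
    (convex_Icc 0 ℓ).norm_image_sub_le_of_norm_hasDerivWithin_le
      (fun z _ ↦ (hw z).hasDerivWithinAt) hK hx hy
  have hbound : ∀ ε ∈ Ioo 0 (ℓ / 2), -(2 * K ^ 2 * ε) ≤ G (ℓ - ε) - G ε := by
    rintro ε ⟨hε, hεℓ⟩
    have hmono := monotoneOn_primitive_sub_cot_mul_sq hc hcℓ.le hw hw'c
      ⟨hε, by linarith⟩ ⟨by linarith, by linarith⟩ (by linarith : ε ≤ ℓ - ε)
    have hcε : c * ε < π := hcℓ ▸ mul_lt_mul_of_pos_left (by linarith) hc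
    have hleft := mul_cot_mul_mul_sq_le hc hε hcε (t := w ε) (K := K) <| by
      simpa [h0, abs_of_pos hε] using hlip 0 ⟨le_rfl, hℓ.le⟩ ε ⟨hε.le, by linarith⟩
    have hright := mul_cot_mul_mul_sq_le hc hε hcε (t := w (ℓ - ε)) (K := K) <| by
      simpa [hℓ0, abs_of_pos hε] using hlip (ℓ - ε) ⟨by linarith, by linarith⟩ ℓ ⟨hℓ.le, le_rfl⟩
    simp only [mul_sub c ℓ ε, hcℓ, cot_pi_sub] at hmono
    linarith
  have hlim : Tendsto (fun ε ↦ G (ℓ - ε) - G ε + 2 * K ^ 2 * ε) (𝓝[>] 0) (𝓝 (G ℓ)) := by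
    have hcont : Continuous fun ε ↦ G (ℓ - ε) - G ε + 2 * K ^ 2 * ε := by fun_prop
    simpa [G] using (hcont.tendsto 0).mono_left nhdsWithin_le_nhds
  have hGℓ : 0 ≤ G ℓ := ge_of_tendsto hlim <| by
    filter_upwards [Ioo_mem_nhdsGT (half_pos hℓ)] with ε hε
    linarith [hbound ε hε]
  have hGℓ_eq : G ℓ = (∫ x in (0 : ℝ)..ℓ, w' x ^ 2) - c ^ 2 * ∫ x in (0 : ℝ)..ℓ, w x ^ 2 := by
    rw [← integral_const_mul, ← integral_sub ((hw'c.fun_pow 2).intervalIntegrable _ _)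
      ((by fun_prop : Continuous _).intervalIntegrable _ _)]
  have hcinv : (ℓ / π) ^ 2 = (c ^ 2)⁻¹ := by rw [← inv_pow, inv_div]
  rw [hcinv, inv_mul_eq_div, le_div_iff₀ (by positivity)]
  linarith

lemma intervalL2Norm_le_wirtinger {ℓ : ℝ} (hℓ : 0 < ℓ) {w w' : ℝ → ℝ}
    (hw : ∀ x, HasDerivAt w (w' x) x) (hw'c : Continuous w') (h0 : w 0 = 0) (hℓ0 : w ℓ = 0) :
    intervalL2Norm 0 ℓ w ≤ ℓ / π * intervalL2Norm 0 ℓ w' := by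
  rw [intervalL2Norm, intervalL2Norm, ← sqrt_sq (by positivity : 0 ≤ ℓ / π),
    ← sqrt_mul (sq_nonneg _)]
  exact sqrt_le_sqrt (integral_sq_le_wirtinger hℓ hw hw'c h0 hℓ0)

section SturmLiouville

variable {a b ℓ p₀ : ℝ} {p p' q f w w' w'' : ℝ → ℝ}

theorem integral_flux_deriv_mul_eq_neg (hp : ∀ x, HasDerivAt p (p' x) x)
    (hw : ∀ x, HasDerivAt w (w' x) x) (hw' : ∀ x, HasDerivAt w' (w'' x) x)
    (hp'c : Continuous p') (hw''c : Continuous w'') (ha : w a = 0) (hb : w b = 0) :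
    ∫ x in a..b, (p' x * w' x + p x * w'' x) * w x = -∫ x in a..b, p x * w' x ^ 2 := by
  have hpc : Continuous p := continuous_of_forall_hasDerivAt hp
  have hw'c : Continuous w' := continuous_of_forall_hasDerivAt hw'
  have hparts := integral_mul_deriv_eq_deriv_mul (fun x _ ↦ hw x) (fun x _ ↦ (hp x).mul (hw' x))
    (hw'c.intervalIntegrable a b) ((by fun_prop : Continuous _).intervalIntegrable a b)
  rw [ha, hb, zero_mul, zero_mul, sub_zero, zero_sub] at hparts
  calc ∫ x in a..b, (p' x * w' x + p x * w'' x) * w x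
      = ∫ x in a..b, w x * (p' x * w' x + p x * w'' x) := integral_congr fun x _ ↦ mul_comm _ _
    _ = -∫ x in a..b, w' x * (p x * w' x) := hparts
    _ = -∫ x in a..b, p x * w' x ^ 2 := by congr 1; exact integral_congr fun x _ ↦ by ring

theorem mul_integral_deriv_sq_le_neg_integral_mul (hab : a ≤ b)
    (hp : ∀ x, HasDerivAt p (p' x) x) (hw : ∀ x, HasDerivAt w (w' x) x)
    (hw' : ∀ x, HasDerivAt w' (w'' x) x) (hp'c : Continuous p') (hqc : Continuous q)
    (hfc : Continuous f) (hw''c : Continuous w'')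
    (hpl : ∀ x ∈ Icc a b, p₀ ≤ p x) (hq : ∀ x ∈ Icc a b, 0 ≤ q x)
    (hode : ∀ x ∈ Icc a b, p' x * w' x + p x * w'' x - q x * w x = f x)
    (ha : w a = 0) (hb : w b = 0) :
    p₀ * ∫ x in a..b, w' x ^ 2 ≤ -∫ x in a..b, f x * w x := by
  have hpc : Continuous p := continuous_of_forall_hasDerivAt hp
  have hwc : Continuous w := continuous_of_forall_hasDerivAt hw
  have hw'c : Continuous w' := continuous_of_forall_hasDerivAt hw'
  have henergy : ∫ x in a..b, (f x * w x + q x * w x ^ 2) = -∫ x in a..b, p x * w' x ^ 2 := by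
    rw [← integral_flux_deriv_mul_eq_neg hp hw hw' hp'c hw''c ha hb]
    refine integral_congr fun x hx ↦ ?_
    rw [uIcc_of_le hab] at hx
    simp only [← hode x hx]
    ring
  rw [integral_add ((hfc.fun_mul hwc).intervalIntegrable a b)
    ((by fun_prop : Continuous _).intervalIntegrable a b)] at henergy
  have hqw : 0 ≤ ∫ x in a..b, q x * w x ^ 2 :=
    integral_nonneg hab fun x hx ↦ mul_nonneg (hq x hx) (sq_nonneg _)
  have hpw : p₀ * ∫ x in a..b, w' x ^ 2 ≤ ∫ x in a..b, p x * w' x ^ 2 := by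
    rw [← integral_const_mul]
    exact integral_mono_on hab ((by fun_prop : Continuous _).intervalIntegrable a b)
      ((by fun_prop : Continuous _).intervalIntegrable a b)
      fun x hx ↦ mul_le_mul_of_nonneg_right (hpl x hx) (sq_nonneg _)
  linarith

theorem mul_intervalL2Norm_deriv_le (hℓ : 0 < ℓ) (hp : ∀ x, HasDerivAt p (p' x) x)
    (hw : ∀ x, HasDerivAt w (w' x) x) (hw' : ∀ x, HasDerivAt w' (w'' x) x)
    (hp'c : Continuous p') (hqc : Continuous q) (hfc : Continuous f) (hw''c : Continuous w'')
    (hpl : ∀ x ∈ Icc 0 ℓ, p₀ ≤ p x) (hq : ∀ x ∈ Icc 0 ℓ, 0 ≤ q x)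
    (hode : ∀ x ∈ Icc 0 ℓ, p' x * w' x + p x * w'' x - q x * w x = f x)
    (h0 : w 0 = 0) (hl : w ℓ = 0) :
    p₀ * intervalL2Norm 0 ℓ w' ≤ ℓ / π * intervalL2Norm 0 ℓ f := by
  have hwc : Continuous w := continuous_of_forall_hasDerivAt hw
  have hw'c : Continuous w' := continuous_of_forall_hasDerivAt hw'
  have hX₀ : 0 ≤ intervalL2Norm 0 ℓ w' := intervalL2Norm.nonneg
  have hkey : p₀ * intervalL2Norm 0 ℓ w' * intervalL2Norm 0 ℓ w'
      ≤ ℓ / π * intervalL2Norm 0 ℓ f * intervalL2Norm 0 ℓ w' :=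
    calc p₀ * intervalL2Norm 0 ℓ w' * intervalL2Norm 0 ℓ w'
        = p₀ * ∫ x in (0 : ℝ)..ℓ, w' x ^ 2 := by rw [mul_assoc, ← sq, intervalL2Norm.sq_eq hℓ.le]
      _ ≤ -∫ x in (0 : ℝ)..ℓ, f x * w x := mul_integral_deriv_sq_le_neg_integral_mul hℓ.le hp hw
          hw' hp'c hqc hfc hw''c hpl hq hode h0 hl
      _ ≤ intervalL2Norm 0 ℓ f * intervalL2Norm 0 ℓ w :=
          (neg_le_abs _).trans (intervalL2Norm.abs_integral_mul_le hℓ.le hfc hwc)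
      _ ≤ intervalL2Norm 0 ℓ f * (ℓ / π * intervalL2Norm 0 ℓ w') :=
          mul_le_mul_of_nonneg_left (intervalL2Norm_le_wirtinger hℓ hw hw'c h0 hl)
            intervalL2Norm.nonneg
      _ = ℓ / π * intervalL2Norm 0 ℓ f * intervalL2Norm 0 ℓ w' := by ring
  rcases hX₀.eq_or_lt with hX | hX
  · rw [← hX, mul_zero]
    exact mul_nonneg (by positivity) intervalL2Norm.nonneg
  · exact le_of_mul_le_mul_right hkey hX

theorem mul_intervalL2Norm_deriv2_le (hab : a ≤ b) (hp₀ : 0 ≤ p₀) (hp'c : Continuous p')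
    (hqc : Continuous q) (hfc : Continuous f) (hwc : Continuous w) (hw'c : Continuous w')
    (hw''c : Continuous w'') {M₁ M₂ : ℝ}
    (hM₁ : ∀ x ∈ Icc a b, |p' x| ≤ M₁) (hM₂ : ∀ x ∈ Icc a b, |q x| ≤ M₂)
    (hpl : ∀ x ∈ Icc a b, p₀ ≤ p x)
    (hode : ∀ x ∈ Icc a b, p' x * w' x + p x * w'' x - q x * w x = f x) :
    p₀ * intervalL2Norm a b w'' ≤
      intervalL2Norm a b f + M₂ * intervalL2Norm a b w + M₁ * intervalL2Norm a b w' := by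
  open intervalL2Norm in
  calc p₀ * intervalL2Norm a b w''
      = intervalL2Norm a b (fun x ↦ p₀ * w'' x) := by rw [const_mul, abs_of_nonneg hp₀]
    _ ≤ intervalL2Norm a b (fun x ↦ f x + (q x * w x + -p' x * w' x)) :=
        le_of_abs_le hab (by fun_prop) (by fun_prop) fun x hx ↦ by
          rw [show f x + (q x * w x + -p' x * w' x) = p x * w'' x by linarith [hode x hx],
            abs_mul, abs_mul]
          exact mul_le_mul_of_nonneg_right (abs_le_abs_of_nonneg hp₀ (hpl x hx)) (abs_nonneg _)
    _ ≤ intervalL2Norm a b f + (intervalL2Norm a b (fun x ↦ q x * w x)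
          + intervalL2Norm a b (fun x ↦ -p' x * w' x)) :=
        (add_le hab hfc (by fun_prop)).trans
          (add_le_add_right (add_le hab (by fun_prop) (by fun_prop)) _)
    _ ≤ intervalL2Norm a b f + (M₂ * intervalL2Norm a b w + M₁ * intervalL2Norm a b w') := by
        gcongr
        · exact mul_le hab hqc hwc hM₂
        · exact mul_le hab hp'c.neg hw'c fun x hx ↦ (abs_neg (p' x)).symm ▸ hM₁ x hx
    _ = _ := by ring

end SturmLiouville

theorem stmt19 (ℓ p₀ q₀ : ℝ) (hℓ : 0 < ℓ) (hp₀ : 0 < p₀) (hq₀ : 0 < q₀)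
    (p p' q f w w' w'' : ℝ → ℝ)
    (hp : ∀ x, HasDerivAt p (p' x) x)
    (hw : ∀ x, HasDerivAt w (w' x) x) (hw' : ∀ x, HasDerivAt w' (w'' x) x)
    (hp'c : Continuous p') (hqc : Continuous q) (hfc : Continuous f)
    (hw''c : Continuous w'')
    (hpl : ∀ x ∈ Set.Icc (0 : ℝ) ℓ, p₀ ≤ p x)
    (hql : ∀ x ∈ Set.Icc (0 : ℝ) ℓ, q₀ ≤ q x)
    (hode : ∀ x ∈ Set.Icc (0 : ℝ) ℓ, p' x * w' x + p x * w'' x - q x * w x = f x)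
    (h0 : w 0 = 0) (hl : w ℓ = 0) :
    Real.sqrt (∫ x in (0 : ℝ)..ℓ, (w'' x) ^ 2) ≤
      (p₀ ^ 2)⁻¹ *
          ((ℓ / Real.pi) * sSup ((fun x => |p' x|) '' Set.Icc (0 : ℝ) ℓ) +
            (ℓ ^ 2 / Real.pi ^ 2) * sSup (q '' Set.Icc (0 : ℝ) ℓ) + p₀) *
        Real.sqrt (∫ x in (0 : ℝ)..ℓ, (f x) ^ 2) := by
  set M₁ := sSup ((fun x => |p' x|) '' Icc (0 : ℝ) ℓ)
  set M₂ := sSup (q '' Icc (0 : ℝ) ℓ)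
  have hq : ∀ x ∈ Icc 0 ℓ, 0 ≤ q x := fun x hx ↦ hq₀.le.trans (hql x hx)
  have hM₁ : ∀ x ∈ Icc 0 ℓ, |p' x| ≤ M₁ := fun x hx ↦
    le_csSup (isCompact_Icc.bddAbove_image hp'c.abs.continuousOn) (mem_image_of_mem _ hx)
  have hM₂ : ∀ x ∈ Icc 0 ℓ, |q x| ≤ M₂ := fun x hx ↦ (abs_of_nonneg (hq x hx)).symm ▸
    le_csSup (isCompact_Icc.bddAbove_image hqc.continuousOn) (mem_image_of_mem _ hx)
  have hM₁₀ : 0 ≤ M₁ := (abs_nonneg _).trans (hM₁ 0 ⟨le_rfl, hℓ.le⟩)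
  have hM₂₀ : 0 ≤ M₂ := (abs_nonneg _).trans (hM₂ 0 ⟨le_rfl, hℓ.le⟩)
  have hw'c : Continuous w' := continuous_of_forall_hasDerivAt hw'
  have hX := mul_intervalL2Norm_deriv_le hℓ hp hw hw' hp'c hqc hfc hw''c hpl hq hode h0 hl
  have hY := intervalL2Norm_le_wirtinger hℓ hw hw'c h0 hl
  have hS := mul_intervalL2Norm_deriv2_le hℓ.le hp₀.le hp'c hqc hfc
    (continuous_of_forall_hasDerivAt hw) hw'c hw''c hM₁ hM₂ hpl hode
  change intervalL2Norm 0 ℓ w'' ≤ _ * intervalL2Norm 0 ℓ f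
  rw [← div_pow, inv_mul_eq_div, div_mul_eq_mul_div, le_div_iff₀ (by positivity)]
  linarith [mul_le_mul_of_nonneg_left hS hp₀.le, mul_le_mul_of_nonneg_left hX hM₁₀,
    mul_le_mul_of_nonneg_left hY (mul_nonneg hM₂₀ hp₀.le),
    mul_le_mul_of_nonneg_left hX (mul_nonneg hM₂₀ (by positivity : 0 ≤ ℓ / π))]
end
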